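/- arXiv:1109.2573 — 4 statements merged into one kernel-verified Lean document; each statement's English description precedes it below -/
import Mathlib

section
/- Let f : [a,b] → ℝ be a continuous function and let ε > 0. Then every column of the ε-pixelation of the graph of f consists of a single stack; that is, for every ε-generic point x ∈ [a,b], the column C_ε(Γ_f, x) of P_ε(Γ_f) over x is nonempty and connected, where Γ_f = {(x, f(x)) : x ∈ [a,b]}. -/
open Set Filter

/-- An `ε`-pixel: the square `[(i-1)ε, iε] × [(j-1)ε, jε]`. -/
def Pixel (ε : ℝ) (i j : ℤ) : Set (ℝ × ℝ) :=
  Icc ((i - 1) * ε) (i * ε) ×ˢ Icc ((j - 1) * ε) (j * ε)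

/-- The `ε`-pixelation of a set `S`: the union of all `ε`-pixels meeting `S`. -/
def Pixelation (ε : ℝ) (S : Set (ℝ × ℝ)) : Set (ℝ × ℝ) :=
  ⋃ (i : ℤ) (j : ℤ) (_ : (Pixel ε i j ∩ S).Nonempty), Pixel ε i j

/-- A point `a` is `ε`-generic if `a ∉ εℤ`. -/
def EpsGeneric (ε a : ℝ) : Prop := ∀ n : ℤ, a ≠ n * ε

/-- The column of the `ε`-pixelation of `S` over a point `a`: the union of the
`ε`-pixels of `P_ε(S)` that meet the vertical line `{x = a}`. -/
def Column (ε : ℝ) (S : Set (ℝ × ℝ)) (a : ℝ) : Set (ℝ × ℝ) :=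
  ⋃ (i : ℤ) (j : ℤ) (_ : (Pixel ε i j ∩ S).Nonempty)
    (_ : a ∈ Icc ((i - 1) * ε) (i * ε)), Pixel ε i j

/-- A semialgebraic subset of `ℝⁿ`: a finite union of sets, each described by finitely
many polynomial equations and finitely many (strict) polynomial inequalities. -/
def IsSemialgebraic {n : ℕ} (X : Set (Fin n → ℝ)) : Prop :=
  ∃ F : Finset (Finset (MvPolynomial (Fin n) ℝ) × Finset (MvPolynomial (Fin n) ℝ)),
    X = ⋃ c ∈ F,
      {x | (∀ p ∈ c.1, MvPolynomial.eval x p = 0) ∧ ∀ q ∈ c.2, 0 < MvPolynomial.eval x q}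

/-- Semialgebraic subsets of the plane `ℝ × ℝ`. -/
def IsSemialgebraic2 (X : Set (ℝ × ℝ)) : Prop :=
  IsSemialgebraic {z : Fin 2 → ℝ | (z 0, z 1) ∈ X}

/-- A function `f` is semialgebraic on `[a,b]` if its graph over `[a,b]` is semialgebraic. -/
def IsSemialgebraicFnOn (f : ℝ → ℝ) (a b : ℝ) : Prop :=
  IsSemialgebraic2 {p : ℝ × ℝ | p.1 ∈ Icc a b ∧ p.2 = f p.1}

/-- The set of connected components of a planar set. -/
def componentsOf (A : Set (ℝ × ℝ)) : Set (Set (ℝ × ℝ)) :=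
  {C | ∃ x ∈ A, C = connectedComponentIn A x}

/-- The number of connected components of a planar set. -/
noncomputable def numComponents (A : Set (ℝ × ℝ)) : ℕ := (componentsOf A).ncard

/-- The component counter `n_S(x)`: the number of connected components of the
intersection of `S` with the vertical line `{x = x₀}`. -/
noncomputable def compCounter (S : Set (ℝ × ℝ)) (x : ℝ) : ℕ :=
  numComponents (S ∩ {p : ℝ × ℝ | p.1 = x})

/-- The stack counter `n_{S,ε}(x)`: the number of connected components of the column
of `P_ε(S)` over `x`. -/
noncomputable def stackCounter (S : Set (ℝ × ℝ)) (ε x : ℝ) : ℕ :=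
  numComponents (Column ε S x)

/-- A jumping point of the component counter: a point where `n_S` differs from its
left limit or from its right limit. -/
def IsJumpingPoint (S : Set (ℝ × ℝ)) (x₀ : ℝ) : Prop :=
  ¬ (∀ᶠ x in nhdsWithin x₀ (Iio x₀), compCounter S x = compCounter S x₀) ∨
  ¬ (∀ᶠ x in nhdsWithin x₀ (Ioi x₀), compCounter S x = compCounter S x₀)

/-- A jumping point of the stack counter `n_{S,ε}`: a point `x₀ ∈ εℤ + ε/2` with
`n_{S,ε}(x₀ - ε) ≠ n_{S,ε}(x₀)`. -/
def IsEpsJumpingPoint (S : Set (ℝ × ℝ)) (ε x₀ : ℝ) : Prop :=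
  (∃ k : ℤ, x₀ = k * ε + ε / 2) ∧ stackCounter S ε (x₀ - ε) ≠ stackCounter S ε x₀

/-! For generic `x` only the pixel column `[(i-1)ε, iε]` containing `x` contributes, so the
column is the union of the pixels of that column which meet the part `T` of the graph lying
over `[(i-1)ε, iε]`. This part is connected, being the graph of a continuous function on an
interval, it lies inside the column, and every pixel of the column meets it; hence the
column is connected. -/

section

variable {ε a : ℝ}

lemma mem_Icc_ceil_div_mul (hε : 0 < ε) (t : ℝ) :
    t ∈ Icc ((⌈t / ε⌉ - 1 : ℝ) * ε) (⌈t / ε⌉ * ε) := by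
  constructor
  · have := Int.ceil_lt_add_one (t / ε)
    nlinarith [(lt_div_iff₀ hε).mp (by linarith : (⌈t / ε⌉ - 1 : ℝ) < t / ε)]
  · exact (div_le_iff₀ hε).mp (Int.le_ceil _)

lemma EpsGeneric.ceil_div_eq (hε : 0 < ε) (ha : EpsGeneric ε a) {i : ℤ}
    (hai : a ∈ Icc ((i - 1) * ε) (i * ε)) : ⌈a / ε⌉ = i := by
  have hlo : ((i - 1 : ℤ) : ℝ) * ε < a :=
    lt_of_le_of_ne (by push_cast; exact hai.1) (ha (i - 1)).symm
  have hhi : a < i * ε := lt_of_le_of_ne hai.2 (ha i)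
  rw [Int.ceil_eq_iff]
  exact ⟨by simpa [lt_div_iff₀ hε] using hlo, (div_le_iff₀ hε).mpr hhi.le⟩

lemma mem_column_of_mem {S : Set (ℝ × ℝ)} (hε : 0 < ε) {p : ℝ × ℝ} (hpS : p ∈ S) {i : ℤ}
    (hpi : p.1 ∈ Icc ((i - 1) * ε) (i * ε)) (hai : a ∈ Icc ((i - 1) * ε) (i * ε)) :
    p ∈ Column ε S a := by
  have hp : p ∈ Pixel ε i ⌈p.2 / ε⌉ := ⟨hpi, mem_Icc_ceil_div_mul hε p.2⟩
  simp only [Column, mem_iUnion]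
  exact ⟨i, _, ⟨p, hp, hpS⟩, hai, hp⟩

theorem isConnected_column {S : Set (ℝ × ℝ)} (hε : 0 < ε) (ha : EpsGeneric ε a)
    (hT : IsConnected (S ∩ Prod.fst ⁻¹' Icc ((⌈a / ε⌉ - 1 : ℝ) * ε) (⌈a / ε⌉ * ε))) :
    IsConnected (Column ε S a) := by
  set T := S ∩ Prod.fst ⁻¹' Icc ((⌈a / ε⌉ - 1 : ℝ) * ε) (⌈a / ε⌉ * ε)
  have hTsub : T ⊆ Column ε S a := fun p hp =>
    mem_column_of_mem hε hp.1 hp.2 (mem_Icc_ceil_div_mul hε a)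
  obtain ⟨q, hq⟩ := hT.nonempty
  refine ⟨⟨q, hTsub hq⟩, isPreconnected_of_forall q fun y hy => ?_⟩
  simp only [Column, mem_iUnion] at hy
  obtain ⟨i, j, ⟨p, hpP, hpS⟩, hai, hy⟩ := hy
  obtain rfl := ha.ceil_div_eq hε hai
  have hpT : p ∈ T := ⟨hpS, hpP.1⟩
  have hPsub : Pixel ε ⌈a / ε⌉ j ⊆ Column ε S a := fun z hz => by
    simp only [Column, mem_iUnion]
    exact ⟨_, j, ⟨p, hpP, hpS⟩, hai, hz⟩
  exact ⟨Pixel ε ⌈a / ε⌉ j ∪ T, union_subset hPsub hTsub, Or.inr hq, Or.inl hy,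
    (isPreconnected_Icc.prod isPreconnected_Icc).union p hpP hpT hT.isPreconnected⟩

lemma graph_inter_fst_preimage (f : ℝ → ℝ) (s t : Set ℝ) :
    {p : ℝ × ℝ | p.1 ∈ s ∧ p.2 = f p.1} ∩ Prod.fst ⁻¹' t = (s ∩ t).graphOn f := by
  ext p
  simp only [mem_inter_iff, mem_ofPred_eq, mem_preimage, mem_graphOn]
  tauto

end

theorem column_of_graph_pixelation_isConnected_general
    (a b : ℝ) (f : ℝ → ℝ) (hf : ContinuousOn f (Icc a b))
    (ε : ℝ) (hε : 0 < ε) (x : ℝ) (hx : x ∈ Icc a b) (hgen : EpsGeneric ε x) :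
    IsConnected (Column ε {p : ℝ × ℝ | p.1 ∈ Icc a b ∧ p.2 = f p.1} x) := by
  refine isConnected_column hε hgen ?_
  rw [graph_inter_fst_preimage]
  have hI : IsConnected (Icc a b ∩ Icc ((⌈x / ε⌉ - 1 : ℝ) * ε) (⌈x / ε⌉ * ε)) :=
    ⟨⟨x, hx, mem_Icc_ceil_div_mul hε x⟩,
      (ordConnected_Icc.inter ordConnected_Icc).isPreconnected⟩
  exact hI.image _ (continuousOn_id.prodMk (hf.mono inter_subset_left))

/-- If `f : [a,b] → ℝ` is continuous, then for every `ε > 0` every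
column of the `ε`-pixelation of the graph of `f` consists of a single stack: for every
`ε`-generic `x ∈ [a,b]`, the column `C_ε(Γ_f, x)` is nonempty and connected. -/
theorem column_of_graph_pixelation_isConnected
    (a b : ℝ) (hab : a ≤ b) (f : ℝ → ℝ) (hf : ContinuousOn f (Icc a b))
    (ε : ℝ) (hε : 0 < ε) (x : ℝ) (hx : x ∈ Icc a b) (hgen : EpsGeneric ε x) :
    IsConnected (Column ε {p : ℝ × ℝ | p.1 ∈ Icc a b ∧ p.2 = f p.1} x) :=
  column_of_graph_pixelation_isConnected_general a b f hf ε hε x hx hgen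
end

section
/- Let S = S(β,τ) be an elementary set over a compact interval [a,b] and let ε > 0. Then for every ε-generic x ∈ [a,b], the column C_ε(S, x) is nonempty and connected, i.e., it consists of exactly one stack. -/
open Set Filter

/-- The elementary set `S(β,τ)` over `[a,b]`. -/
def ElementarySet (a b : ℝ) (β τ : ℝ → ℝ) : Set (ℝ × ℝ) :=
  {p : ℝ × ℝ | p.1 ∈ Icc a b ∧ β p.1 ≤ p.2 ∧ p.2 ≤ τ p.1}

/-- If `S = S(β,τ)` is an elementary set over a compact interval `[a,b]`
(`β, τ` continuous semialgebraic with `β ≤ τ`), then for every `ε > 0` and every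
`ε`-generic `x ∈ [a,b]`, the column `C_ε(S, x)` is nonempty and connected, i.e. it
consists of exactly one stack. -/
theorem column_of_elementarySet_pixelation_isConnected
    (a b : ℝ) (hab : a ≤ b) (β τ : ℝ → ℝ)
    (hβc : ContinuousOn β (Icc a b)) (hτc : ContinuousOn τ (Icc a b))
    (hβsa : IsSemialgebraicFnOn β a b) (hτsa : IsSemialgebraicFnOn τ a b)
    (hβτ : ∀ x ∈ Icc a b, β x ≤ τ x)
    (ε : ℝ) (hε : 0 < ε) (x : ℝ) (hx : x ∈ Icc a b) (hgen : EpsGeneric ε x) :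
    IsConnected (Column ε (ElementarySet a b β τ) x) := by

  classical
  set S := ElementarySet a b β τ with hS
  have hεne : ε ≠ 0 := hε.ne'
  set i₀ : ℤ := ⌈x / ε⌉ with hi₀
  have hx1 : ((i₀ : ℝ) - 1) * ε < x := by
    have h := Int.ceil_lt_add_one (x / ε)
    have h2 : (i₀ : ℝ) - 1 < x / ε := by rw [hi₀]; push_cast; linarith
    calc ((i₀ : ℝ) - 1) * ε < (x / ε) * ε := by
            exact mul_lt_mul_of_pos_right h2 hε
      _ = x := div_mul_cancel₀ x hεne
  have hx2 : x < (i₀ : ℝ) * ε := by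
    have h : x / ε ≤ (i₀ : ℝ) := Int.le_ceil _
    have h' : x ≤ (i₀ : ℝ) * ε := by
      calc x = (x / ε) * ε := (div_mul_cancel₀ x hεne).symm
        _ ≤ (i₀ : ℝ) * ε := mul_le_mul_of_nonneg_right h hε.le
    exact lt_of_le_of_ne h' (hgen i₀)
  -- uniqueness of the column index
  have huniq : ∀ i : ℤ, x ∈ Icc (((i : ℝ) - 1) * ε) ((i : ℝ) * ε) → i = i₀ := by
    intro i ⟨h1, h2⟩
    have h1' : ((i : ℝ) - 1) * ε < x := by
      refine lt_of_le_of_ne h1 (fun h => hgen (i - 1) ?_)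
      push_cast; linarith [h]
    have h2' : x < (i : ℝ) * ε := lt_of_le_of_ne h2 (hgen i)
    have hlo : (i : ℝ) - 1 < x / ε := by
      rw [lt_div_iff₀ hε]; exact h1'
    have hhi : x / ε < (i : ℝ) := by
      rw [div_lt_iff₀ hε]; exact h2'
    have ha : i₀ ≤ i := Int.ceil_le.mpr hhi.le
    have hb : i - 1 < i₀ := by
      have := Int.lt_ceil.mpr (by exact_mod_cast hlo : ((i - 1 : ℤ) : ℝ) < x / ε)
      exact this
    omega
  set J : Set ℤ := {j : ℤ | (Pixel ε i₀ j ∩ S).Nonempty} with hJ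
  -- betweenness closure of J
  have hbet : ∀ j1 ∈ J, ∀ j2 ∈ J, ∀ j : ℤ, j1 ≤ j → j ≤ j2 → j ∈ J := by
    intro j1 hj1 j2 hj2 j hle1 hle2
    rcases eq_or_lt_of_le hle1 with rfl | hlt1
    · exact hj1
    rcases eq_or_lt_of_le hle2 with rfl | hlt2
    · exact hj2
    obtain ⟨⟨u1, v1⟩, hp1, hs1⟩ := hj1
    obtain ⟨⟨u2, v2⟩, hp2, hs2⟩ := hj2
    simp only [Pixel, Set.mem_prod, Set.mem_Icc] at hp1 hp2
    obtain ⟨hu1ab, hβ1, hτ1⟩ := hs1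
    obtain ⟨hu2ab, hβ2, hτ2⟩ := hs2
    have hc1 : ((j1 : ℝ)) * ε ≤ ((j : ℝ) - 1) * ε := by
      have : (j1 : ℝ) ≤ (j : ℝ) - 1 := by
        have h' : (j1 : ℤ) ≤ j - 1 := by omega
        exact_mod_cast h'
      exact mul_le_mul_of_nonneg_right this hε.le
    have hc2 : (j : ℝ) * ε ≤ ((j2 : ℝ) - 1) * ε := by
      have : (j : ℝ) ≤ (j2 : ℝ) - 1 := by
        have h' : (j : ℤ) ≤ j2 - 1 := by omega
        exact_mod_cast h'
      exact mul_le_mul_of_nonneg_right this hε.le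
    have hβu1 : β u1 ≤ ((j : ℝ) - 1) * ε := le_trans (le_trans hβ1 hp1.2.2) hc1
    have hτu2 : (j : ℝ) * ε ≤ τ u2 := le_trans (le_trans hc2 hp2.2.1) hτ2
    have hjj : ((j : ℝ) - 1) * ε ≤ (j : ℝ) * ε := by nlinarith
    by_cases hcase : β u2 ≤ (j : ℝ) * ε
    · refine ⟨(u2, max (β u2) (((j : ℝ) - 1) * ε)), ?_, ?_⟩
      · simp only [Pixel, Set.mem_prod, Set.mem_Icc]
        exact ⟨hp2.1, le_max_right _ _, max_le hcase hjj⟩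
      · exact ⟨hu2ab, le_max_left _ _,
          max_le (le_trans hβ2 hτ2) (le_trans hjj hτu2)⟩
    · push_neg at hcase
      have huIcc : uIcc u1 u2 ⊆ Icc a b :=
        (Set.ordConnected_Icc).uIcc_subset hu1ab hu2ab
      have hIVT := intermediate_value_uIcc (hβc.mono huIcc)
      have hmem : (j : ℝ) * ε ∈ uIcc (β u1) (β u2) := by
        apply Set.Icc_subset_uIcc
        exact ⟨le_trans hβu1 hjj, hcase.le⟩
      obtain ⟨u, hu, hβu⟩ := hIVT hmem
      have huab : u ∈ Icc a b := huIcc hu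
      have hustrip : u ∈ Icc (((i₀ : ℝ) - 1) * ε) ((i₀ : ℝ) * ε) := by
        have : uIcc u1 u2 ⊆ Icc (((i₀ : ℝ) - 1) * ε) ((i₀ : ℝ) * ε) :=
          (Set.ordConnected_Icc).uIcc_subset
            (Set.mem_Icc.mpr hp1.1) (Set.mem_Icc.mpr hp2.1)
        exact this hu
      refine ⟨(u, (j : ℝ) * ε), ?_, ?_⟩
      · simp only [Pixel, Set.mem_prod, Set.mem_Icc]
        exact ⟨Set.mem_Icc.mp hustrip, hjj, le_refl _⟩
      · exact ⟨huab, hβu.le, hβu.ge.trans (hβτ u huab)⟩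
  -- J is nonempty
  have hJne : (⌈β x / ε⌉ : ℤ) ∈ J := by
    refine ⟨(x, β x), ?_, ?_⟩
    · simp only [Pixel, Set.mem_prod, Set.mem_Icc]
      refine ⟨⟨hx1.le, hx2.le⟩, ?_, ?_⟩
      · have h := Int.ceil_lt_add_one (β x / ε)
        have h2 : (⌈β x / ε⌉ : ℝ) - 1 < β x / ε := by push_cast; linarith
        have := mul_lt_mul_of_pos_right h2 hε
        rw [div_mul_cancel₀ (β x) hεne] at this
        exact this.le
      · have h : β x / ε ≤ (⌈β x / ε⌉ : ℝ) := Int.le_ceil _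
        calc β x = (β x / ε) * ε := (div_mul_cancel₀ (β x) hεne).symm
          _ ≤ (⌈β x / ε⌉ : ℝ) * ε := mul_le_mul_of_nonneg_right h hε.le
    · exact ⟨hx, le_refl _, hβτ x hx⟩
  -- description of the column as a product
  have hcol : Column ε S x
      = Icc (((i₀ : ℝ) - 1) * ε) ((i₀ : ℝ) * ε)
        ×ˢ (⋃ j ∈ J, Icc (((j : ℝ) - 1) * ε) ((j : ℝ) * ε)) := by
    ext ⟨u, v⟩
    simp only [Column, Set.mem_iUnion, Set.mem_prod, Set.mem_iUnion₂]
    constructor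
    · rintro ⟨i, j, hne, hxi, hp⟩
      have hi := huniq i hxi
      subst hi
      simp only [Pixel, Set.mem_prod] at hp
      exact ⟨hp.1, ⟨j, hne, hp.2⟩⟩
    · rintro ⟨hu, j, hj, hv⟩
      exact ⟨i₀, j, hj, ⟨hx1.le, hx2.le⟩, by
        simp only [Pixel, Set.mem_prod]; exact ⟨hu, hv⟩⟩
  rw [hS] at hcol ⊢
  rw [hcol]
  apply IsConnected.prod
  · exact ⟨⟨x, hx1.le, hx2.le⟩, isPreconnected_Icc⟩
  · constructor
    · refine ⟨β x, Set.mem_iUnion₂.mpr ⟨⌈β x / ε⌉, hJne, ?_⟩⟩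
      obtain ⟨⟨u, w⟩, hp, _⟩ := hJne
      constructor
      · have h := Int.ceil_lt_add_one (β x / ε)
        have h2 : (⌈β x / ε⌉ : ℝ) - 1 < β x / ε := by push_cast; linarith
        have := mul_lt_mul_of_pos_right h2 hε
        rw [div_mul_cancel₀ (β x) hεne] at this
        exact this.le
      · have h : β x / ε ≤ (⌈β x / ε⌉ : ℝ) := Int.le_ceil _
        calc β x = (β x / ε) * ε := (div_mul_cancel₀ (β x) hεne).symm
          _ ≤ (⌈β x / ε⌉ : ℝ) * ε := mul_le_mul_of_nonneg_right h hε.le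
    · rw [isPreconnected_iff_ordConnected]
      constructor
      intro y1 hy1 y2 hy2 y hy
      obtain ⟨j1, hj1, hy1'⟩ := Set.mem_iUnion₂.mp hy1
      obtain ⟨j2, hj2, hy2'⟩ := Set.mem_iUnion₂.mp hy2
      set j : ℤ := ⌈y / ε⌉ with hjdef
      have hylo : ((j : ℝ) - 1) * ε ≤ y := by
        have h := Int.ceil_lt_add_one (y / ε)
        have h2 : (j : ℝ) - 1 < y / ε := by rw [hjdef]; push_cast; linarith
        have := mul_lt_mul_of_pos_right h2 hε
        rw [div_mul_cancel₀ y hεne] at this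
        exact this.le
      have hyhi : y ≤ (j : ℝ) * ε := by
        have h : y / ε ≤ (j : ℝ) := Int.le_ceil _
        calc y = (y / ε) * ε := (div_mul_cancel₀ y hεne).symm
          _ ≤ (j : ℝ) * ε := mul_le_mul_of_nonneg_right h hε.le
      have hjle2 : j ≤ j2 := by
        apply Int.ceil_le.mpr
        rw [div_le_iff₀ hε]
        exact le_trans hy.2 hy2'.2
      by_cases hjge1 : j1 ≤ j
      · exact Set.mem_iUnion₂.mpr ⟨j, hbet j1 hj1 j2 hj2 j hjge1 hjle2, hylo, hyhi⟩
      · push_neg at hjge1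
        have hc : (j : ℝ) * ε ≤ ((j1 : ℝ) - 1) * ε := by
          have : (j : ℝ) ≤ (j1 : ℝ) - 1 := by
            have h' : (j : ℤ) ≤ j1 - 1 := by omega
            exact_mod_cast h'
          exact mul_le_mul_of_nonneg_right this hε.le
        have hye : y = y1 := le_antisymm
          (le_trans hyhi (le_trans hc hy1'.1)) hy.1
        exact Set.mem_iUnion₂.mpr ⟨j1, hj1, hye ▸ hy1'⟩
end

section
/- Let f, g : [a,b] → ℝ be continuous semialgebraic functions with f(x) < g(x) for all x ∈ [a,b], and let G = Γ_f ∪ Γ_g be the union of their graphs. Fix L > 0, α ∈ (0,1] and x₀ ∈ [a,b] such that (i) either |g(x) − g(y)| ≤ L|x−y|^α for all x, y ∈ [a,b], or |f(x) − f(y)| ≤ L|x−y|^α for all x, y ∈ [a,b], and (ii) g(x₀) − f(x₀) ≤ g(x) − f(x) for all x ∈ [a,b]. Then for every ε > 0 with 3ε + Lε^α < g(x₀) − f(x₀) and every ε-generic x ∈ [a,b], the column C_ε(G, x) has exactly two connected components. In particular, if min_{x∈[a,b]}(g(x) − f(x)) ≥ 3ε + Lε^α, then n_{G,ε}(x) =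 n_G(x) for every ε-generic x ∈ [a,b]. -/
open Set Filter

/-- The union of the graphs over `[a,b]` of two functions. -/
def TwoGraphs (a b : ℝ) (f g : ℝ → ℝ) : Set (ℝ × ℝ) :=
  {p : ℝ × ℝ | p.1 ∈ Icc a b ∧ p.2 = f p.1} ∪ {p : ℝ × ℝ | p.1 ∈ Icc a b ∧ p.2 = g p.1}

-- auxiliary lemmas to be inserted before separation_theorem

lemma cc_union_eq_left {A B : Set (ℝ × ℝ)} (hA : IsPreconnected A)
    (hAc : IsClosed A) (hBc : IsClosed B) (hd : Disjoint A B)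
    {p : ℝ × ℝ} (hp : p ∈ A) : connectedComponentIn (A ∪ B) p = A := by
  apply subset_antisymm
  · have hsub : connectedComponentIn (A ∪ B) p ⊆ A ∪ B := connectedComponentIn_subset _ _
    have hpc : IsPreconnected (connectedComponentIn (A ∪ B) p) :=
      isPreconnected_connectedComponentIn
    have hemp : connectedComponentIn (A ∪ B) p ∩ (A ∩ B) = ∅ := by
      rw [Set.disjoint_iff_inter_eq_empty.1 hd, inter_empty]
    rcases isPreconnected_iff_subset_of_disjoint_closed.1 hpc A B hAc hBc hsub hemp with h | h
    · exact h
    · exact absurd (h (mem_connectedComponentIn (Or.inl hp)))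
        (fun hb => Set.disjoint_left.1 hd hp hb)
  · exact hA.subset_connectedComponentIn hp subset_union_left

lemma numComponents_union_two {A B : Set (ℝ × ℝ)}
    (hA : IsPreconnected A) (hB : IsPreconnected B)
    (hAc : IsClosed A) (hBc : IsClosed B)
    (hAn : A.Nonempty) (hBn : B.Nonempty) (hd : Disjoint A B) :
    numComponents (A ∪ B) = 2 := by
  have hccB : ∀ p ∈ B, connectedComponentIn (A ∪ B) p = B := by
    intro p hp
    have := cc_union_eq_left hB hBc hAc hd.symm hp
    rwa [union_comm B A] at this
  have hcomp : componentsOf (A ∪ B) = {A, B} := by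
    ext C
    simp only [componentsOf, mem_setOf_eq, mem_insert_iff, mem_singleton_iff]
    constructor
    · rintro ⟨p, hp, rfl⟩
      rcases hp with hp | hp
      · exact Or.inl (cc_union_eq_left hA hAc hBc hd hp)
      · exact Or.inr (hccB p hp)
    · rintro (rfl | rfl)
      · obtain ⟨p, hp⟩ := hAn
        exact ⟨p, Or.inl hp, (cc_union_eq_left hA hAc hBc hd hp).symm⟩
      · obtain ⟨p, hp⟩ := hBn
        exact ⟨p, Or.inr hp, (hccB p hp).symm⟩
  have hne : A ≠ B := by
    obtain ⟨p, hp⟩ := hAn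
    intro h
    exact Set.disjoint_left.1 hd hp (h ▸ hp)
  rw [numComponents, hcomp]
  exact Set.ncard_pair hne

lemma exists_pixel_interval (ε : ℝ) (hε : 0 < ε) (m M v : ℝ) (hmM : m ≤ M) :
    (∃ j : ℤ, (m ≤ (j : ℝ) * ε ∧ ((j : ℝ) - 1) * ε ≤ M) ∧
        v ∈ Icc (((j : ℝ) - 1) * ε) ((j : ℝ) * ε))
      ↔ v ∈ Icc (((⌈m / ε⌉ : ℝ) - 1) * ε) (((⌊M / ε⌋ : ℝ) + 1) * ε) := by
  have hdm : ∀ c : ℝ, c / ε * ε = c := fun c => div_mul_cancel₀ c hε.ne'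
  constructor
  · rintro ⟨j, ⟨h1, h2⟩, hv1, hv2⟩
    have hj1 : (⌈m / ε⌉ : ℝ) ≤ (j : ℝ) := by
      exact_mod_cast Int.ceil_le.2 ((div_le_iff₀ hε).2 h1)
    have hj2 : (j : ℝ) ≤ (⌊M / ε⌋ : ℝ) + 1 := by
      have h3 : (j - 1 : ℤ) ≤ ⌊M / ε⌋ := by
        apply Int.le_floor.2
        rw [le_div_iff₀ hε]
        push_cast
        linarith
      have : ((j : ℝ) - 1) ≤ (⌊M / ε⌋ : ℝ) := by exact_mod_cast h3
      linarith
    constructor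
    · have := mul_le_mul_of_nonneg_right (by linarith : (⌈m / ε⌉ : ℝ) - 1 ≤ (j : ℝ) - 1) hε.le
      linarith [hv1]
    · have := mul_le_mul_of_nonneg_right hj2 hε.le
      linarith [hv2]
  · rintro ⟨hv1, hv2⟩
    refine ⟨max ⌈m / ε⌉ ⌈v / ε⌉, ⟨?_, ?_⟩, ?_, ?_⟩
    · rw [← div_le_iff₀ hε]
      calc m / ε ≤ (⌈m / ε⌉ : ℝ) := Int.le_ceil _
        _ ≤ ((max ⌈m / ε⌉ ⌈v / ε⌉ : ℤ) : ℝ) := by exact_mod_cast le_max_left _ _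
    · have hb1 : ⌈m / ε⌉ ≤ ⌊M / ε⌋ + 1 := by
        apply Int.ceil_le.2
        push_cast
        have h4 : m / ε ≤ M / ε := by gcongr
        linarith [Int.lt_floor_add_one (M / ε)]
      have hb2 : ⌈v / ε⌉ ≤ ⌊M / ε⌋ + 1 := by
        apply Int.ceil_le.2
        push_cast
        rw [div_le_iff₀ hε]
        linarith
      have hb : ((max ⌈m / ε⌉ ⌈v / ε⌉ : ℤ) : ℝ) ≤ (⌊M / ε⌋ : ℝ) + 1 := by
        exact_mod_cast max_le hb1 hb2
      have hfl : (⌊M / ε⌋ : ℝ) ≤ M / ε := Int.floor_le _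
      have := mul_le_mul_of_nonneg_right (by linarith :
        ((max ⌈m / ε⌉ ⌈v / ε⌉ : ℤ) : ℝ) - 1 ≤ M / ε) hε.le
      rw [hdm] at this
      exact this
    · rcases le_total ⌈v / ε⌉ ⌈m / ε⌉ with h | h
      · rw [max_eq_left h]
        exact hv1
      · rw [max_eq_right h]
        have : (⌈v / ε⌉ : ℝ) - 1 ≤ v / ε := by linarith [Int.ceil_lt_add_one (v / ε)]
        have := mul_le_mul_of_nonneg_right this hε.le
        rw [hdm] at this
        exact this
    · have : v / ε ≤ ((max ⌈m / ε⌉ ⌈v / ε⌉ : ℤ) : ℝ) := by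
        calc v / ε ≤ (⌈v / ε⌉ : ℝ) := Int.le_ceil _
          _ ≤ _ := by exact_mod_cast le_max_right _ _
      rw [← div_le_iff₀ hε]
      exact this

lemma column_two_components
    (a b : ℝ) (f g : ℝ → ℝ)
    (hfc : ContinuousOn f (Icc a b)) (hgc : ContinuousOn g (Icc a b))
    (L α : ℝ) (hL : 0 < L) (hα : α ∈ Ioc (0:ℝ) 1)
    (x₀ : ℝ) (hx₀ : x₀ ∈ Icc a b)
    (hHolder :
      (∀ x ∈ Icc a b, ∀ y ∈ Icc a b, |g x - g y| ≤ L * |x - y| ^ α) ∨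
      (∀ x ∈ Icc a b, ∀ y ∈ Icc a b, |f x - f y| ≤ L * |x - y| ^ α))
    (hmin : ∀ x ∈ Icc a b, g x₀ - f x₀ ≤ g x - f x)
    (ε : ℝ) (hε : 0 < ε) (hgap : 3 * ε + L * ε ^ α ≤ g x₀ - f x₀)
    (x : ℝ) (hx : x ∈ Icc a b) (hgen : EpsGeneric ε x) :
    numComponents (Column ε (TwoGraphs a b f g) x) = 2 := by
  set G := TwoGraphs a b f g with hG
  set i₀ : ℤ := ⌈x / ε⌉ with hi₀def
  have hwidth : (i₀ : ℝ) * ε - ((i₀ : ℝ) - 1) * ε = ε := by ring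
  have hxle : x ≤ (i₀ : ℝ) * ε := (div_le_iff₀ hε).1 (Int.le_ceil _)
  have hxlt : x < (i₀ : ℝ) * ε := lt_of_le_of_ne hxle (hgen i₀)
  have hx1 : ((i₀ : ℝ) - 1) * ε < x := by
    have h1 : ((i₀ : ℝ) - 1) < x / ε := by
      linarith [Int.ceil_lt_add_one (x / ε)]
    have := (lt_div_iff₀ hε).1 h1
    linarith
  -- the unique column index
  have hmemI : ∀ i : ℤ, x ∈ Icc (((i : ℝ) - 1) * ε) ((i : ℝ) * ε) ↔ i = i₀ := by
    intro i
    constructor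
    · rintro ⟨h1, h2⟩
      have h1' : ((i : ℝ) - 1) * ε < x := by
        rcases lt_or_eq_of_le h1 with h | h
        · exact h
        · exact absurd h.symm (by
            have := hgen (i - 1)
            push_cast at this
            exact this)
      have hle : i₀ ≤ i := Int.ceil_le.2 ((div_le_iff₀ hε).2 h2)
      have hge : i ≤ i₀ := by
        have hh : ((i : ℝ) - 1) < x / ε := (lt_div_iff₀ hε).2 h1'
        have hh2 : ((i : ℝ) - 1) < (i₀ : ℝ) := lt_of_lt_of_le hh (Int.le_ceil _)
        have : (i : ℤ) - 1 < i₀ := by exact_mod_cast hh2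
        omega
      omega
    · rintro rfl
      exact ⟨hx1.le, hxle⟩
  -- the compact interval over the column
  set K : Set ℝ := Icc (max (((i₀ : ℝ) - 1) * ε) a) (min ((i₀ : ℝ) * ε) b) with hK
  have hxK : x ∈ K := ⟨max_le hx1.le hx.1, le_min hxle hx.2⟩
  have hKab : K ⊆ Icc a b := Icc_subset_Icc (le_max_right _ _) (min_le_right _ _)
  have hKI : K ⊆ Icc (((i₀ : ℝ) - 1) * ε) ((i₀ : ℝ) * ε) :=
    Icc_subset_Icc (le_max_left _ _) (min_le_left _ _)
  have hKne : K.Nonempty := ⟨x, hxK⟩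
  have hKcp : IsCompact K := isCompact_Icc
  have hfK : ContinuousOn f K := hfc.mono hKab
  have hgK : ContinuousOn g K := hgc.mono hKab
  obtain ⟨p₁, hp₁K, hp₁⟩ := hKcp.exists_isMinOn hKne hfK
  obtain ⟨p₂, hp₂K, hp₂⟩ := hKcp.exists_isMaxOn hKne hfK
  obtain ⟨q₁, hq₁K, hq₁⟩ := hKcp.exists_isMinOn hKne hgK
  obtain ⟨q₂, hq₂K, hq₂⟩ := hKcp.exists_isMaxOn hKne hgK
  set mf := f p₁ with hmf
  set Mf := f p₂ with hMf
  set mg := g q₁ with hmg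
  set Mg := g q₂ with hMg
  have hmfMf : mf ≤ Mf := hp₁ hp₂K
  have hmgMg : mg ≤ Mg := hq₁ hq₂K
  have hIVTf : Icc mf Mf ⊆ f '' K := isPreconnected_Icc.intermediate_value hp₁K hp₂K hfK
  have hIVTg : Icc mg Mg ⊆ g '' K := isPreconnected_Icc.intermediate_value hq₁K hq₂K hgK
  -- characterization of occupied pixels for f
  have hcf : ∀ j : ℤ, (∃ t ∈ K, f t ∈ Icc (((j : ℝ) - 1) * ε) ((j : ℝ) * ε)) ↔
      (mf ≤ (j : ℝ) * ε ∧ ((j : ℝ) - 1) * ε ≤ Mf) := by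
    intro j
    constructor
    · rintro ⟨t, htK, ht1, ht2⟩
      exact ⟨le_trans (hp₁ htK) ht2, le_trans ht1 (hp₂ htK)⟩
    · rintro ⟨h1, h2⟩
      have hεj : ((j : ℝ) - 1) * ε ≤ (j : ℝ) * ε := by nlinarith
      have hy : max (((j : ℝ) - 1) * ε) mf ∈ Icc mf Mf :=
        ⟨le_max_right _ _, max_le h2 hmfMf⟩
      obtain ⟨t, htK, hft⟩ := hIVTf hy
      exact ⟨t, htK, by rw [hft]; exact ⟨le_max_left _ _, max_le hεj h1⟩⟩
  have hcg : ∀ j : ℤ, (∃ t ∈ K, g t ∈ Icc (((j : ℝ) - 1) * ε) ((j : ℝ) * ε)) ↔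
      (mg ≤ (j : ℝ) * ε ∧ ((j : ℝ) - 1) * ε ≤ Mg) := by
    intro j
    constructor
    · rintro ⟨t, htK, ht1, ht2⟩
      exact ⟨le_trans (hq₁ htK) ht2, le_trans ht1 (hq₂ htK)⟩
    · rintro ⟨h1, h2⟩
      have hεj : ((j : ℝ) - 1) * ε ≤ (j : ℝ) * ε := by nlinarith
      have hy : max (((j : ℝ) - 1) * ε) mg ∈ Icc mg Mg :=
        ⟨le_max_right _ _, max_le h2 hmgMg⟩
      obtain ⟨t, htK, hgt⟩ := hIVTg hy
      exact ⟨t, htK, by rw [hgt]; exact ⟨le_max_left _ _, max_le hεj h1⟩⟩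
  -- the pixels of the column
  have hPix : ∀ j : ℤ, (Pixel ε i₀ j ∩ G).Nonempty ↔
      ((∃ t ∈ K, f t ∈ Icc (((j : ℝ) - 1) * ε) ((j : ℝ) * ε)) ∨
       (∃ t ∈ K, g t ∈ Icc (((j : ℝ) - 1) * ε) ((j : ℝ) * ε))) := by
    intro j
    constructor
    · rintro ⟨⟨u, v⟩, ⟨hu, hv⟩, hGm⟩
      rcases hGm with ⟨huab, hval⟩ | ⟨huab, hval⟩
      · exact Or.inl ⟨u, ⟨max_le hu.1 huab.1, le_min hu.2 huab.2⟩, by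
          simp only at hval; rw [← hval]; exact hv⟩
      · exact Or.inr ⟨u, ⟨max_le hu.1 huab.1, le_min hu.2 huab.2⟩, by
          simp only at hval; rw [← hval]; exact hv⟩
    · rintro (⟨t, htK, htf⟩ | ⟨t, htK, htg⟩)
      · exact ⟨(t, f t), ⟨hKI htK, htf⟩, Or.inl ⟨hKab htK, rfl⟩⟩
      · exact ⟨(t, g t), ⟨hKI htK, htg⟩, Or.inr ⟨hKab htK, rfl⟩⟩
  -- the column as a product
  set Yf : Set ℝ := Icc (((⌈mf / ε⌉ : ℝ) - 1) * ε) (((⌊Mf / ε⌋ : ℝ) + 1) * ε) with hYf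
  set Yg : Set ℝ := Icc (((⌈mg / ε⌉ : ℝ) - 1) * ε) (((⌊Mg / ε⌋ : ℝ) + 1) * ε) with hYg
  have hCol : Column ε G x = Icc (((i₀ : ℝ) - 1) * ε) ((i₀ : ℝ) * ε) ×ˢ (Yf ∪ Yg) := by
    ext ⟨u, v⟩
    simp only [Column, mem_iUnion, mem_prod]
    constructor
    · rintro ⟨i, j, hne, hxi, hp⟩
      have hii : i = i₀ := (hmemI i).1 hxi
      subst hii
      obtain ⟨hu, hv⟩ := hp
      refine ⟨hu, ?_⟩
      rcases (hPix j).1 hne with h | h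
      · exact Or.inl ((exists_pixel_interval ε hε mf Mf v hmfMf).1 ⟨j, (hcf j).1 h, hv⟩)
      · exact Or.inr ((exists_pixel_interval ε hε mg Mg v hmgMg).1 ⟨j, (hcg j).1 h, hv⟩)
    · rintro ⟨hu, hv | hv⟩
      · obtain ⟨j, hcond, hvj⟩ := (exists_pixel_interval ε hε mf Mf v hmfMf).2 hv
        exact ⟨i₀, j, (hPix j).2 (Or.inl ((hcf j).2 hcond)), (hmemI i₀).2 rfl, hu, hvj⟩
      · obtain ⟨j, hcond, hvj⟩ := (exists_pixel_interval ε hε mg Mg v hmgMg).2 hv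
        exact ⟨i₀, j, (hPix j).2 (Or.inr ((hcg j).2 hcond)), (hmemI i₀).2 rfl, hu, hvj⟩
  -- the gap between the two bands
  have hdist : |q₁ - p₂| ≤ ε := by
    have h1 := hKI hq₁K
    have h2 := hKI hp₂K
    rw [abs_le]
    exact ⟨by linarith [h1.1, h2.2, hwidth], by linarith [h1.2, h2.1, hwidth]⟩
  have hrpow : L * |q₁ - p₂| ^ α ≤ L * ε ^ α :=
    mul_le_mul_of_nonneg_left (Real.rpow_le_rpow (abs_nonneg _) hdist hα.1.le) hL.le
  have hsep3 : mg - Mf ≥ 3 * ε := by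
    rcases hHolder with hg | hf
    · have h1 := hg q₁ (hKab hq₁K) p₂ (hKab hp₂K)
      have h2 : g p₂ - g q₁ ≤ |g q₁ - g p₂| := by
        rw [abs_sub_comm]; exact le_abs_self _
      have h3 := hmin p₂ (hKab hp₂K)
      simp only [hmg, hMf]
      linarith
    · have h1 := hf q₁ (hKab hq₁K) p₂ (hKab hp₂K)
      have h2 : f p₂ - f q₁ ≤ |f q₁ - f p₂| := by
        rw [abs_sub_comm]; exact le_abs_self _
      have h3 := hmin q₁ (hKab hq₁K)
      simp only [hmg, hMf]
      linarith
  have hYfhi : ((⌊Mf / ε⌋ : ℝ) + 1) * ε ≤ Mf + ε := by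
    have h1 : (⌊Mf / ε⌋ : ℝ) ≤ Mf / ε := Int.floor_le _
    have h2 := mul_le_mul_of_nonneg_right (by linarith : (⌊Mf / ε⌋ : ℝ) + 1 ≤ Mf / ε + 1) hε.le
    have h3 : (Mf / ε + 1) * ε = Mf + ε := by field_simp
    linarith
  have hYglo : mg - ε ≤ ((⌈mg / ε⌉ : ℝ) - 1) * ε := by
    have h1 : mg / ε ≤ (⌈mg / ε⌉ : ℝ) := Int.le_ceil _
    have h2 := mul_le_mul_of_nonneg_right (by linarith : mg / ε - 1 ≤ (⌈mg / ε⌉ : ℝ) - 1) hε.le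
    have h3 : (mg / ε - 1) * ε = mg - ε := by field_simp
    linarith
  have hsep : ((⌊Mf / ε⌋ : ℝ) + 1) * ε < ((⌈mg / ε⌉ : ℝ) - 1) * ε := by
    linarith
  -- nonemptiness of the bands
  have hYfne : Yf.Nonempty := by
    rw [hYf, nonempty_Icc]
    have h1 : (⌈mf / ε⌉ : ℝ) - 1 ≤ mf / ε := by linarith [Int.ceil_lt_add_one (mf / ε)]
    have h2 : Mf / ε ≤ (⌊Mf / ε⌋ : ℝ) + 1 := by linarith [Int.lt_floor_add_one (Mf / ε)]
    have h3 : mf / ε ≤ Mf / ε := by gcongr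
    have := mul_le_mul_of_nonneg_right (by linarith : (⌈mf / ε⌉ : ℝ) - 1 ≤ (⌊Mf / ε⌋ : ℝ) + 1) hε.le
    linarith
  have hYgne : Yg.Nonempty := by
    rw [hYg, nonempty_Icc]
    have h1 : (⌈mg / ε⌉ : ℝ) - 1 ≤ mg / ε := by linarith [Int.ceil_lt_add_one (mg / ε)]
    have h2 : Mg / ε ≤ (⌊Mg / ε⌋ : ℝ) + 1 := by linarith [Int.lt_floor_add_one (Mg / ε)]
    have h3 : mg / ε ≤ Mg / ε := by gcongr
    have := mul_le_mul_of_nonneg_right (by linarith : (⌈mg / ε⌉ : ℝ) - 1 ≤ (⌊Mg / ε⌋ : ℝ) + 1) hε.le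
    linarith
  -- conclude
  rw [hCol, prod_union]
  apply numComponents_union_two
  · exact ((convex_Icc _ _).prod (convex_Icc _ _)).isPreconnected
  · exact ((convex_Icc _ _).prod (convex_Icc _ _)).isPreconnected
  · exact isClosed_Icc.prod isClosed_Icc
  · exact isClosed_Icc.prod isClosed_Icc
  · exact (nonempty_Icc.2 (by linarith)).prod hYfne
  · exact (nonempty_Icc.2 (by linarith)).prod hYgne
  · rw [Set.disjoint_left]
    rintro ⟨u, v⟩ ⟨_, hv1⟩ ⟨_, hv2⟩
    exact absurd (lt_of_le_of_lt hv1.2 (lt_of_lt_of_le hsep hv2.1)) (lt_irrefl v)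

lemma compCounter_eq_two (a b : ℝ) (f g : ℝ → ℝ) (x : ℝ)
    (hx : x ∈ Icc a b) (hlt : f x < g x) :
    compCounter (TwoGraphs a b f g) x = 2 := by
  have hset : TwoGraphs a b f g ∩ {p : ℝ × ℝ | p.1 = x} =
      {((x : ℝ), f x)} ∪ {((x : ℝ), g x)} := by
    ext ⟨u, v⟩
    simp only [TwoGraphs, mem_inter_iff, mem_union, mem_setOf_eq, mem_singleton_iff,
      Prod.mk.injEq]
    constructor
    · rintro ⟨h | h, rfl⟩
      · exact Or.inl ⟨rfl, h.2⟩
      · exact Or.inr ⟨rfl, h.2⟩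
    · rintro (⟨rfl, rfl⟩ | ⟨rfl, rfl⟩)
      · exact ⟨Or.inl ⟨hx, rfl⟩, rfl⟩
      · exact ⟨Or.inr ⟨hx, rfl⟩, rfl⟩
  show numComponents _ = 2
  rw [hset]
  exact numComponents_union_two isPreconnected_singleton isPreconnected_singleton
    isClosed_singleton isClosed_singleton (singleton_nonempty _) (singleton_nonempty _)
    (Set.disjoint_singleton.2 (fun h => hlt.ne (congrArg Prod.snd h)))

/-- **Separation Theorem.** Let `f, g : [a,b] → ℝ` be continuous
semialgebraic with `f < g`, `G` the union of their graphs; fix `L > 0`, `α ∈ (0,1]`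
and `x₀ ∈ [a,b]` such that `g` or `f` is `(L,α)`-Hölder on `[a,b]` and `g - f` attains
its minimum over `[a,b]` at `x₀`. Then for every `ε > 0` with `3ε + Lε^α < g(x₀) - f(x₀)`
the column `C_ε(G,x)` has exactly two connected components for every `ε`-generic
`x ∈ [a,b]`; in particular, if `3ε + Lε^α ≤ g - f` on all of `[a,b]`, then
`n_{G,ε}(x) = n_G(x)` for every `ε`-generic `x ∈ [a,b]`. -/
theorem separation_theorem
    (a b : ℝ) (hab : a ≤ b) (f g : ℝ → ℝ)
    (hfc : ContinuousOn f (Icc a b)) (hgc : ContinuousOn g (Icc a b))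
    (hfsa : IsSemialgebraicFnOn f a b) (hgsa : IsSemialgebraicFnOn g a b)
    (hfg : ∀ x ∈ Icc a b, f x < g x)
    (L α : ℝ) (hL : 0 < L) (hα : α ∈ Ioc (0:ℝ) 1)
    (x₀ : ℝ) (hx₀ : x₀ ∈ Icc a b)
    (hHolder :
      (∀ x ∈ Icc a b, ∀ y ∈ Icc a b, |g x - g y| ≤ L * |x - y| ^ α) ∨
      (∀ x ∈ Icc a b, ∀ y ∈ Icc a b, |f x - f y| ≤ L * |x - y| ^ α))
    (hmin : ∀ x ∈ Icc a b, g x₀ - f x₀ ≤ g x - f x) :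
    (∀ ε : ℝ, 0 < ε → 3 * ε + L * ε ^ α < g x₀ - f x₀ →
      ∀ x ∈ Icc a b, EpsGeneric ε x →
        numComponents (Column ε (TwoGraphs a b f g) x) = 2) ∧
    (∀ ε : ℝ, 0 < ε → (∀ x ∈ Icc a b, 3 * ε + L * ε ^ α ≤ g x - f x) →
      ∀ x ∈ Icc a b, EpsGeneric ε x →
        stackCounter (TwoGraphs a b f g) ε x = compCounter (TwoGraphs a b f g) x) := by
  constructor
  · intro ε hε hlt x hx hgen
    exact column_two_components a b f g hfc hgc L α hL hα x₀ hx₀ hHolder hmin ε hε hlt.le x hx hgen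
  · intro ε hε hle x hx hgen
    have h1 : numComponents (Column ε (TwoGraphs a b f g) x) = 2 :=
      column_two_components a b f g hfc hgc L α hL hα x₀ hx₀ hHolder hmin ε hε (hle x₀ hx₀)
        x hx hgen
    have h2 : compCounter (TwoGraphs a b f g) x = 2 :=
      compCounter_eq_two a b f g x hx (hfg x hx)
    rw [stackCounter, h1, h2]
end

section
/- Let β, τ : [a,b] → ℝ be continuous semialgebraic functions with β(x) < τ(x) for all x ∈ (a,b). Then there exist a constant C > 0 and a positive integer r such that for every ħ ∈ (0, (b−a)/2) and every x ∈ [a+ħ, b−ħ], one has τ(x) − β(x) ≥ C ħ^r. -/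
open Set Filter

/-!
Both graphs lie on algebraic curves: a semialgebraic set with empty interior is contained in the
zero set of a nonzero polynomial, so `P(x, β x) = 0` and `Q(x, τ x) = 0` for nonzero bivariate `P`,
`Q`. The resultant `R(x, z) = Res_Y(P(x, Y), Q(x, Y + z))` is then a nonzero polynomial with
`R(x, τ x - β x) = 0`. Dividing `R` by the largest power of `z` it contains and setting `z = 0`
gives a nonzero `p` with `|p x| ≤ M (τ x - β x)` on `(a, b)`; near each endpoint `|p|` is bounded
below by a power of the distance to it (the root multiplicity there), and in between `τ - β` has a
positive minimum.
-/

open Polynomial Topology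

def basicSemialgebraicSet {n : ℕ} (E S : Finset (MvPolynomial (Fin n) ℝ)) : Set (Fin n → ℝ) :=
  {x | (∀ p ∈ E, MvPolynomial.eval x p = 0) ∧ ∀ q ∈ S, 0 < MvPolynomial.eval x q}

theorem exists_ne_zero_forall_eval_eq_zero_of_basicSemialgebraicSet_subset {n : ℕ}
    {X : Set (Fin n → ℝ)} (hX : interior X = ∅) {E S : Finset (MvPolynomial (Fin n) ℝ)}
    (hsub : basicSemialgebraicSet E S ⊆ X) :
    ∃ p : MvPolynomial (Fin n) ℝ, p ≠ 0 ∧ ∀ x ∈ basicSemialgebraicSet E S, p.eval x = 0 := by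
  by_cases hE : ∃ p ∈ E, p ≠ 0
  · obtain ⟨p, hpE, hp⟩ := hE
    exact ⟨p, hp, fun x hx => hx.1 p hpE⟩
  push Not at hE
  -- with no nontrivial equation the basic set is open, hence empty
  have hopen : IsOpen (basicSemialgebraicSet E S) := by
    have : basicSemialgebraicSet E S = ⋂ q ∈ S, {x | 0 < MvPolynomial.eval x q} := by
      ext x
      simp only [basicSemialgebraicSet, mem_ofPred_eq, mem_iInter]
      exact ⟨And.right, fun h => ⟨fun p hp => by simp [hE p hp], h⟩⟩
    rw [this]
    exact isOpen_biInter_finset fun q _ =>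
      isOpen_lt continuous_const (MvPolynomial.continuous_eval q)
  have hempty : basicSemialgebraicSet E S = ∅ :=
    subset_empty_iff.1 (hX ▸ interior_maximal hsub hopen)
  exact ⟨1, one_ne_zero, by simp [hempty]⟩

theorem IsSemialgebraic.exists_ne_zero_forall_eval_eq_zero {n : ℕ} {X : Set (Fin n → ℝ)}
    (hX : IsSemialgebraic X) (hint : interior X = ∅) :
    ∃ p : MvPolynomial (Fin n) ℝ, p ≠ 0 ∧ ∀ x ∈ X, p.eval x = 0 := by
  obtain ⟨F, rfl⟩ := hX
  have hcell (c : Finset (MvPolynomial (Fin n) ℝ) × Finset (MvPolynomial (Fin n) ℝ)) (hc : c ∈ F) :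
      ∃ p : MvPolynomial (Fin n) ℝ, p ≠ 0 ∧ ∀ x ∈ basicSemialgebraicSet c.1 c.2, p.eval x = 0 :=
    exists_ne_zero_forall_eval_eq_zero_of_basicSemialgebraicSet_subset hint
      (subset_biUnion_of_mem (u := fun c => basicSemialgebraicSet c.1 c.2) hc)
  choose! p hp0 hp using hcell
  refine ⟨∏ c ∈ F, p c, Finset.prod_ne_zero_iff.2 hp0, fun x hx => ?_⟩
  obtain ⟨c, hc, hxc⟩ := mem_iUnion₂.1 hx
  rw [map_prod]
  exact Finset.prod_eq_zero hc (hp c hc x hxc)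

theorem interior_setOf_apply_one_eq_eq_empty (f : ℝ → ℝ) :
    interior {z : Fin 2 → ℝ | z 1 = f (z 0)} = ∅ := by
  refine eq_empty_of_forall_notMem fun z hz => ?_
  have hline : Tendsto (fun t => Function.update z 1 t) (𝓝[≠] (z 1)) (𝓝 z) := by
    refine tendsto_nhdsWithin_of_tendsto_nhds ?_
    have hcont : Continuous fun t : ℝ => Function.update z 1 t := by fun_prop
    simpa using hcont.tendsto (z 1)
  obtain ⟨t, ht, hne⟩ :=
    ((hline.eventually (isOpen_interior.mem_nhds hz)).and self_mem_nhdsWithin).exists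
  have hz1 : z ∈ {z : Fin 2 → ℝ | z 1 = f (z 0)} := interior_subset hz
  have ht1 : Function.update z 1 t ∈ {z : Fin 2 → ℝ | z 1 = f (z 0)} := interior_subset ht
  simp only [mem_ofPred_eq, Function.update_self] at hz1 ht1
  rw [Function.update_of_ne (by decide)] at ht1
  exact hne (ht1.trans hz1.symm)

noncomputable def MvPolynomial.toBivariate {R : Type*} [CommRing R] :
    MvPolynomial (Fin 2) R →ₐ[R] R[X][X] :=
  aeval ![Polynomial.C Polynomial.X, Polynomial.X]

theorem MvPolynomial.evalEval_toBivariate {R : Type*} [CommRing R] (s t : R)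
    (p : MvPolynomial (Fin 2) R) : (toBivariate p).evalEval s t = p.eval ![s, t] := by
  induction p using MvPolynomial.induction_on with
  | C r => simp [toBivariate]
  | add p q hp hq => simp [hp, hq]
  | mul_X p i hp =>
    rw [map_mul, evalEval_mul, hp, map_mul]
    fin_cases i <;> simp [toBivariate, evalEval_C]

theorem MvPolynomial.toBivariate_injective {R : Type*} [CommRing R] [IsDomain R] [Infinite R] :
    Function.Injective (toBivariate (R := R)) := by
  refine (injective_iff_map_eq_zero _).2 fun p hp => MvPolynomial.funext fun x => ?_
  have := evalEval_toBivariate (x 0) (x 1) p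
  have hx : ![x 0, x 1] = x := by ext i; fin_cases i <;> rfl
  rw [hp, evalEval_zero, hx] at this
  rw [map_zero, this]

theorem IsSemialgebraicFnOn.exists_ne_zero_forall_evalEval_eq_zero {f : ℝ → ℝ} {a b : ℝ}
    (hf : IsSemialgebraicFnOn f a b) :
    ∃ P : ℝ[X][X], P ≠ 0 ∧ ∀ x ∈ Icc a b, P.evalEval x (f x) = 0 := by
  obtain ⟨p, hp, hvan⟩ := IsSemialgebraic.exists_ne_zero_forall_eval_eq_zero hf <|
    subset_empty_iff.1 <| interior_setOf_apply_one_eq_eq_empty f ▸ interior_mono fun _ hz => hz.2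
  refine ⟨MvPolynomial.toBivariate p, ?_, fun x hx => ?_⟩
  · exact (map_ne_zero_iff _ MvPolynomial.toBivariate_injective).2 hp
  · rw [MvPolynomial.evalEval_toBivariate]
    exact hvan ![x, f x] ⟨hx, rfl⟩

/-- `Res_Y(P(x, Y), Q(x, Y + z))`, as a polynomial in `z` over `R[x]`. -/
noncomputable def diffResultant {R : Type*} [CommRing R] (P Q : R[X][X]) : R[X][X] :=
  resultant (P.map C) ((Q.map C).taylor X)

theorem evalEval_diffResultant_eq_zero {R : Type*} [CommRing R] {P Q : R[X][X]}
    (hP : P.natDegree ≠ 0) {s u v : R} (hu : P.evalEval s u = 0) (hv : Q.evalEval s v = 0) :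
    (diffResultant P Q).evalEval s (v - u) = 0 := by
  obtain ⟨p, q, -, -, hpq⟩ := exists_mul_add_mul_eq_C_resultant (P.map C) ((Q.map C).taylor X)
    le_rfl le_rfl (.inl (by rwa [natDegree_map_eq_of_injective C_injective]))
  set ψ := evalEvalRingHom s (v - u)
  have hψC : ψ.comp C = evalRingHom s := by ext <;> simp [ψ]
  have hPu : (P.map C).eval₂ ψ u = 0 := by
    rwa [eval₂_map, hψC, eval₂_evalRingHom]
  have hQv : ((Q.map C).taylor X).eval₂ ψ u = 0 := by
    rwa [taylor_apply, eval₂_comp, eval₂_map, hψC, eval₂_evalRingHom, eval₂_add, eval₂_X, eval₂_C,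
      show ψ X = v - u by simp [ψ], add_sub_cancel]
  have h := congrArg (eval₂ ψ u) hpq
  rw [eval₂_add, eval₂_mul, eval₂_mul, hPu, hQv, eval₂_C, zero_mul, zero_mul, add_zero] at h
  exact h.symm

theorem Polynomial.resultant_ne_zero_of_forall_mem_roots {L : Type*} [Field L] {F G : L[X]}
    (hF : F ≠ 0) (hsplit : F.Splits) {n : ℕ} (hn : G.natDegree ≤ n)
    (hG : ∀ α ∈ F.roots, G.eval α ≠ 0) :
    resultant F G F.natDegree n ≠ 0 := by
  rw [resultant_eq_prod_eval F G n hn hsplit]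
  refine mul_ne_zero (pow_ne_zero _ (leadingCoeff_ne_zero.2 hF)) (Multiset.prod_ne_zero ?_)
  simpa using hG

theorem Polynomial.exists_forall_mem_roots_eval_add_algebraMap_ne_zero {K L : Type*} [Field K]
    [Infinite K] [Field L] [Algebra K L] (F : L[X]) {G : L[X]} (hG : G ≠ 0) :
    ∃ c : K, ∀ α ∈ F.roots, G.eval (α + algebraMap K L c) ≠ 0 := by
  classical
  let bad : Finset L := (G.roots.toFinset ×ˢ F.roots.toFinset).image fun z => z.1 - z.2
  obtain ⟨c, hc⟩ := Infinite.exists_notMem_finset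
    (bad.preimage (algebraMap K L) (algebraMap K L).injective.injOn)
  refine ⟨c, fun α hα hroot => hc ?_⟩
  simp only [Finset.mem_preimage, bad, Finset.mem_image, Finset.mem_product,
    Multiset.mem_toFinset, Prod.exists]
  exact ⟨_, α, ⟨(mem_roots hG).2 hroot, hα⟩, add_sub_cancel_left _ _⟩

theorem diffResultant_ne_zero {K : Type*} [Field K] [Infinite K] {P Q : K[X][X]}
    (hP : P ≠ 0) (hQ : Q ≠ 0) : diffResultant P Q ≠ 0 := by
  -- specialise `x` to a point `s` where both leading coefficients survive and `z` to a generic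
  -- constant `c`; over the algebraic closure the resultant is then a product of nonzero values
  obtain ⟨s, hs⟩ : ∃ s, (P.leadingCoeff * Q.leadingCoeff).eval s ≠ 0 := by
    by_contra! h
    exact mul_ne_zero (leadingCoeff_ne_zero.2 hP) (leadingCoeff_ne_zero.2 hQ)
      (Polynomial.funext (by simpa using h))
  obtain ⟨hPs, hQs⟩ := mul_ne_zero_iff.1 (by rwa [eval_mul] at hs)
  let ι := algebraMap K (AlgebraicClosure K)
  let F := (P.map (evalRingHom s)).map ι
  let G := (Q.map (evalRingHom s)).map ι
  have hFdeg : F.natDegree = P.natDegree := by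
    rw [natDegree_map, natDegree_map_of_leadingCoeff_ne_zero _ hPs]
  have hF : F ≠ 0 := by
    rw [Ne, Polynomial.map_eq_zero_iff ι.injective]
    exact fun h => hPs (by simpa using congrArg (coeff · P.natDegree) h)
  have hG : G ≠ 0 := by
    rw [Ne, Polynomial.map_eq_zero_iff ι.injective]
    exact fun h => hQs (by simpa using congrArg (coeff · Q.natDegree) h)
  obtain ⟨c, hc⟩ := exists_forall_mem_roots_eval_add_algebraMap_ne_zero (K := K) F hG
  let φ := ι.comp (evalEvalRingHom s c)
  have hφC : φ.comp C = ι.comp (evalRingHom s) := by ext <;> simp [φ]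
  have hφ : φ (diffResultant P Q) = resultant F (G.taylor (ι c)) F.natDegree Q.natDegree := by
    rw [diffResultant, ← resultant_map_map, map_taylor, show φ X = ι c by simp [φ],
      Polynomial.map_map, Polynomial.map_map, hφC, natDegree_taylor,
      natDegree_map_eq_of_injective C_injective, natDegree_map_eq_of_injective C_injective, hFdeg,
      ← Polynomial.map_map, ← Polynomial.map_map]
  have hres : resultant F (G.taylor (ι c)) F.natDegree Q.natDegree ≠ 0 :=
    resultant_ne_zero_of_forall_mem_roots hF (IsAlgClosed.splits F)
      (by rw [natDegree_taylor]; exact natDegree_map_le.trans natDegree_map_le)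
      fun α hα => by rw [taylor_eval]; exact hc α hα
  rw [← hφ] at hres
  exact fun h => hres (by rw [h, map_zero])

theorem exists_ne_zero_forall_evalEval_sub_eq_zero {K : Type*} [Field K] [Infinite K]
    {P Q : K[X][X]} (hP : P ≠ 0) (hQ : Q ≠ 0) :
    ∃ R : K[X][X], R ≠ 0 ∧ ∀ s u v, P.evalEval s u = 0 → Q.evalEval s v = 0 →
      R.evalEval s (v - u) = 0 := by
  by_cases hdeg : P.natDegree = 0
  · rw [eq_C_of_natDegree_eq_zero hdeg] at hP ⊢
    refine ⟨C (P.coeff 0), hP, fun s u v hu _ => ?_⟩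
    rwa [evalEval_C] at hu ⊢
  · exact ⟨diffResultant P Q, diffResultant_ne_zero hP hQ,
      fun s u v => evalEval_diffResultant_eq_zero hdeg⟩

theorem Polynomial.continuous_evalEval {R : Type*} [CommSemiring R] [TopologicalSpace R]
    [IsTopologicalSemiring R] (T : R[X][X]) :
    Continuous fun z : R × R => T.evalEval z.1 z.2 := by
  simp only [evalEval, eval_eq_sum_range (p := T), eval_finsetSum, eval_mul, eval_pow, eval_C]
  fun_prop

theorem Polynomial.exists_mul_pow_le_abs_eval {p : ℝ[X]} (hp : p ≠ 0) (c : ℝ) {r : ℕ}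
    (hr : p.rootMultiplicity c ≤ r) :
    ∃ δ > 0, ∃ e > 0, ∀ x, |x - c| ≤ δ → e * |x - c| ^ r ≤ |p.eval x| := by
  set m := p.rootMultiplicity c
  set q := p /ₘ (X - C c) ^ m
  have hpq : p = (X - C c) ^ m * q := (pow_mul_divByMonic_rootMultiplicity_eq p c).symm
  have hqc : 0 < |q.eval c| := abs_pos.2 (eval_divByMonic_pow_rootMultiplicity_ne_zero c hp)
  obtain ⟨δ, hδ, hq⟩ := Metric.eventually_nhds_iff.1 <|
    continuousAt_const.eventually_lt q.continuous.abs.continuousAt (half_lt_self hqc)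
  refine ⟨min (δ / 2) 1, by positivity, |q.eval c| / 2, by positivity, fun x hx => ?_⟩
  have hqx : |q.eval c| / 2 < |q.eval x| :=
    hq (by rw [Real.dist_eq]; linarith [min_le_left (δ / 2) 1])
  calc |q.eval c| / 2 * |x - c| ^ r
      ≤ |q.eval x| * |x - c| ^ m :=
        mul_le_mul hqx.le (pow_le_pow_of_le_one (abs_nonneg _) (hx.trans (min_le_right _ _)) hr)
          (by positivity) (abs_nonneg _)
    _ = |p.eval x| := by
        rw [hpq, eval_mul, eval_pow, eval_sub, eval_X, eval_C, abs_mul, abs_pow, mul_comm]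

theorem exists_abs_eval_le_of_evalEval_eq_zero {K t : Set ℝ} (hK : IsCompact K) (htK : t ⊆ K)
    {g : ℝ → ℝ} (hg : ContinuousOn g K) (hpos : ∀ x ∈ t, 0 < g x) {R : ℝ[X][X]} (hR : R ≠ 0)
    (hvan : ∀ x ∈ t, R.evalEval x (g x) = 0) :
    ∃ p : ℝ[X], p ≠ 0 ∧ ∀ x ∈ t, |p.eval x| ≤ g x := by
  obtain ⟨R₁, hRR₁, hXR₁⟩ := exists_eq_pow_rootMultiplicity_mul_and_not_dvd R hR 0
  rw [map_zero, sub_zero] at hRR₁ hXR₁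
  have hvan₁ (x) (hx : x ∈ t) : R₁.evalEval x (g x) = 0 := by
    have := hvan x hx
    rw [hRR₁, evalEval_mul, evalEval_pow, evalEval_X] at this
    exact (mul_eq_zero.1 this).resolve_left (pow_ne_zero _ (hpos x hx).ne')
  obtain ⟨M, hM⟩ := hK.exists_bound_of_continuousOn <|
    R₁.divX.continuous_evalEval.comp_continuousOn (continuousOn_id.prodMk hg)
  set M' := max M 1
  have hM' : 0 < M' := lt_max_of_lt_right one_pos
  refine ⟨C M'⁻¹ * R₁.coeff 0, mul_ne_zero (C_ne_zero.2 (inv_ne_zero hM'.ne'))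
    (mt X_dvd_iff.2 hXR₁), fun x hx => ?_⟩
  have hsplit := congrArg (evalEval x (g x)) (X_mul_divX_add R₁)
  rw [evalEval_add, evalEval_mul, evalEval_X, evalEval_C, hvan₁ x hx] at hsplit
  have hbound : |R₁.divX.evalEval x (g x)| ≤ M' := (hM x (htK hx)).trans (le_max_left _ _)
  rw [eval_mul, eval_C, abs_mul, abs_inv, abs_of_pos hM', ← neg_eq_of_add_eq_zero_right hsplit,
    abs_neg, abs_mul, abs_of_pos (hpos x hx), inv_mul_le_iff₀ hM', mul_comm]
  exact mul_le_mul_of_nonneg_right hbound (hpos x hx).le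

theorem exists_mul_min_sub_pow_le {a b : ℝ} (hab : a < b) {g : ℝ → ℝ}
    (hg : ContinuousOn g (Icc a b)) (hpos : ∀ x ∈ Ioo a b, 0 < g x) {p : ℝ[X]} (hp : p ≠ 0)
    (hpg : ∀ x ∈ Ioo a b, |p.eval x| ≤ g x) :
    ∃ C > 0, ∃ r : ℕ, 0 < r ∧ ∀ x ∈ Ioo a b, C * min (x - a) (b - x) ^ r ≤ g x := by
  set r := max (max (p.rootMultiplicity a) (p.rootMultiplicity b)) 1
  obtain ⟨δa, hδa, ea, hea, ha⟩ :=
    p.exists_mul_pow_le_abs_eval hp a (r := r) (le_max_of_le_left (le_max_left _ _))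
  obtain ⟨δb, hδb, eb, heb, hb⟩ :=
    p.exists_mul_pow_le_abs_eval hp b (r := r) (le_max_of_le_left (le_max_right _ _))
  set δ := min (min δa δb) ((b - a) / 2)
  have hδ : 0 < δ := lt_min (lt_min hδa hδb) (by linarith)
  have hδab : δ ≤ (b - a) / 2 := min_le_right _ _
  obtain ⟨x₀, hx₀, hmin⟩ := isCompact_Icc.exists_isMinOn (nonempty_Icc.2 (by linarith))
    (hg.mono (Icc_subset_Icc (by linarith) (by linarith) : Icc (a + δ) (b - δ) ⊆ Icc a b))
  have hgx₀ : 0 < g x₀ := hpos x₀ ⟨by linarith [hx₀.1], by linarith [hx₀.2]⟩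
  set C := min (min ea eb) (g x₀ / ((b - a) / 2) ^ r)
  have hC : 0 < C := lt_min (lt_min hea heb) (by have := sub_pos.2 hab; positivity)
  refine ⟨C, hC, r, lt_max_of_lt_right one_pos, fun x hx => ?_⟩
  set d := min (x - a) (b - x)
  have hd : 0 < d := lt_min (sub_pos.2 hx.1) (sub_pos.2 hx.2)
  have near_endpoint (c e δ' : ℝ) (hCe : C ≤ e) (hdc : d ≤ |x - c|) (hcδ : |x - c| ≤ δ')
      (hpc : ∀ y, |y - c| ≤ δ' → e * |y - c| ^ r ≤ |p.eval y|) : C * d ^ r ≤ g x :=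
    calc C * d ^ r ≤ e * |x - c| ^ r :=
          mul_le_mul hCe (pow_le_pow_left₀ hd.le hdc r) (by positivity) (hC.le.trans hCe)
      _ ≤ g x := (hpc x hcδ).trans (hpg x hx)
  have hxa : |x - a| = x - a := abs_of_pos (sub_pos.2 hx.1)
  have hxb : |x - b| = b - x := by rw [abs_sub_comm, abs_of_pos (sub_pos.2 hx.2)]
  rcases le_or_gt (x - a) δ with hxaδ | hxaδ
  · exact near_endpoint a ea δa ((min_le_left _ _).trans (min_le_left _ _))
      (by rw [hxa]; exact min_le_left _ _)
      (by rw [hxa]; exact hxaδ.trans ((min_le_left _ _).trans (min_le_left _ _))) ha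
  rcases le_or_gt (b - x) δ with hxbδ | hxbδ
  · exact near_endpoint b eb δb ((min_le_left _ _).trans (min_le_right _ _))
      (by rw [hxb]; exact min_le_right _ _)
      (by rw [hxb]; exact hxbδ.trans ((min_le_left _ _).trans (min_le_right _ _))) hb
  calc C * d ^ r ≤ g x₀ / ((b - a) / 2) ^ r * ((b - a) / 2) ^ r := by
        gcongr
        · exact min_le_right _ _
        · linarith [min_le_left (x - a) (b - x), min_le_right (x - a) (b - x)]
    _ = g x₀ := div_mul_cancel₀ _ (by have := sub_pos.2 hab; positivity)
    _ ≤ g x := hmin ⟨by linarith, by linarith⟩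

/-- If `β, τ : [a,b] → ℝ` are continuous semialgebraic with
`β(x) < τ(x)` for all `x ∈ (a,b)`, then there are `C > 0` and a positive integer `r`
such that `τ(x) - β(x) ≥ C h^r` whenever `h ∈ (0, (b-a)/2)` and `x ∈ [a+h, b-h]`. -/
theorem gap_lower_bound_lojasiewicz
    (a b : ℝ) (hab : a < b) (β τ : ℝ → ℝ)
    (hβc : ContinuousOn β (Icc a b)) (hτc : ContinuousOn τ (Icc a b))
    (hβsa : IsSemialgebraicFnOn β a b) (hτsa : IsSemialgebraicFnOn τ a b)
    (hlt : ∀ x ∈ Ioo a b, β x < τ x) :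
    ∃ C > (0:ℝ), ∃ r : ℕ, 0 < r ∧
      ∀ h ∈ Ioo (0:ℝ) ((b - a) / 2), ∀ x ∈ Icc (a + h) (b - h),
        C * h ^ r ≤ τ x - β x := by
  obtain ⟨P, hP, hβP⟩ := hβsa.exists_ne_zero_forall_evalEval_eq_zero
  obtain ⟨Q, hQ, hτQ⟩ := hτsa.exists_ne_zero_forall_evalEval_eq_zero
  obtain ⟨R, hR, hRPQ⟩ := exists_ne_zero_forall_evalEval_sub_eq_zero hP hQ
  have hgap_cont : ContinuousOn (fun x => τ x - β x) (Icc a b) := hτc.sub hβc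
  have hgap_pos (x) (hx : x ∈ Ioo a b) : 0 < τ x - β x := sub_pos.2 (hlt x hx)
  obtain ⟨p, hp, hpgap⟩ := exists_abs_eval_le_of_evalEval_eq_zero isCompact_Icc
    Ioo_subset_Icc_self hgap_cont hgap_pos hR fun x hx =>
      hRPQ x _ _ (hβP x (Ioo_subset_Icc_self hx)) (hτQ x (Ioo_subset_Icc_self hx))
  obtain ⟨C, hC, r, hr, hCr⟩ := exists_mul_min_sub_pow_le hab hgap_cont hgap_pos hp hpgap
  refine ⟨C, hC, r, hr, fun h hh x hx => ?_⟩
  have hxab : x ∈ Ioo a b := ⟨by linarith [hh.1, hx.1], by linarith [hh.1, hx.2]⟩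
  calc C * h ^ r ≤ C * min (x - a) (b - x) ^ r := by
        gcongr
        · exact hh.1.le
        · exact le_min (by linarith [hx.1]) (by linarith [hx.2])
    _ ≤ τ x - β x := hCr x hxab
end
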